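/- Let G be an AH-algebra, let g ∈ G with spectral resolution (p_λ)_{λ∈ℝ}, and let α ∈ ℝ. Then p_α is the infimum in the partially ordered set P of the set {p_μ : μ ∈ ℝ, α < μ}. -/

import Mathlib

/-- An e-ring `(R,E)`: an associative ring `R` with unity together with a set `E ⊆ R`
of effects, satisfying the Foulis axioms.  `E⁺` is realized as the additive submonoid
closure of `E` (the set of all finite sums of effects). -/
structure ERing (R : Type*) [Ring R] where
  E : Set R
  zero_mem : (0 : R) ∈ E
  one_mem : (1 : R) ∈ E
  compl_mem : ∀ e ∈ E, 1 - e ∈ E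
  epos_i : ∀ a ∈ AddSubmonoid.closure E, -a ∈ AddSubmonoid.closure E → a = 0
  epos_ii : ∀ a ∈ AddSubmonoid.closure E, 1 - a ∈ AddSubmonoid.closure E → a ∈ E
  epos_iii : ∀ a ∈ AddSubmonoid.closure E, ∀ b ∈ AddSubmonoid.closure E,
    a * b = b * a → a * b ∈ AddSubmonoid.closure E
  epos_iv : ∀ a ∈ AddSubmonoid.closure E, ∀ b ∈ AddSubmonoid.closure E,
    a * b * a ∈ AddSubmonoid.closure E
  epos_v : ∀ a ∈ AddSubmonoid.closure E, ∀ b ∈ AddSubmonoid.closure E,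
    a * b * a = 0 → a * b = 0 ∧ b * a = 0
  epos_vi : ∀ a ∈ AddSubmonoid.closure E, ∀ b ∈ AddSubmonoid.closure E,
    (a - b) ^ 2 ∈ AddSubmonoid.closure E
  zero_ne_one : (0 : R) ≠ 1

namespace ERing

variable {R : Type*} [Ring R] (er : ERing R)

/-- `E⁺`, the set of all finite sums of effects; the positive cone of the directed group. -/
def Epos : Set R := (AddSubmonoid.closure er.E : Set R)

/-- The directed group `G = E⁺ - E⁺` of the e-ring. -/
def G : Set R := {g | ∃ a ∈ er.Epos, ∃ b ∈ er.Epos, g = a - b}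

/-- The partial order on the directed group: `g ≤ h` iff `h - g ∈ E⁺`. -/
def le (g h : R) : Prop := h - g ∈ er.Epos

/-- The set of projections `P = {p ∈ G : p = p²}`. -/
def P : Set R := {p | p ∈ er.G ∧ p = p ^ 2}

/-- The commutant in `G` of a subset `A ⊆ G`. -/
def commutant (A : Set R) : Set R := {g | g ∈ er.G ∧ ∀ a ∈ A, g * a = a * g}

/-- The bicommutant in `G` of a subset `A ⊆ G`. -/
def CC (A : Set R) : Set R := er.commutant (er.commutant A)

/-- `s` is the supremum of `A` within the subset `S` (w.r.t. the e-ring order). -/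
def IsSupIn (S A : Set R) (s : R) : Prop :=
  s ∈ S ∧ (∀ a ∈ A, er.le a s) ∧ ∀ b ∈ S, (∀ a ∈ A, er.le a b) → er.le s b

/-- `s` is the infimum of `A` within the subset `S` (w.r.t. the e-ring order). -/
def IsInfIn (S A : Set R) (s : R) : Prop :=
  s ∈ S ∧ (∀ a ∈ A, er.le s a) ∧ ∀ b ∈ S, (∀ a ∈ A, er.le b a) → er.le b s

/-- Quadratic annihilation property. -/
def HasQA : Prop := ∀ g ∈ er.G, ∀ h ∈ er.G, g * h ^ 2 * g = 0 → g * h = 0 ∧ h * g = 0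

/-- Commutative Vigier property: every ascending sequence of pairwise commuting elements
of `G` bounded above in `G` has a supremum in `G` which double commutes with the sequence. -/
def HasCV : Prop :=
  ∀ g : ℕ → R, (∀ n, g n ∈ er.G) → (∀ n, er.le (g n) (g (n + 1))) →
    (∀ m n, g m * g n = g n * g m) → (∃ b ∈ er.G, ∀ n, er.le (g n) b) →
    ∃ s, er.IsSupIn er.G (Set.range g) s ∧ s ∈ er.CC (Set.range g)

/-- `G` is an abstract Hermitian (AH) algebra: there is a semitransparent effect `½`,
`G` has quadratic annihilation, and `G` has the commutative Vigier property. -/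
def IsAH : Prop := (∃ h ∈ er.E, h + h = 1) ∧ er.HasQA ∧ er.HasCV

end ERing

namespace ERing

variable {R : Type*} [Ring R] (er : ERing R)

/-- `m` is the absolute value `|g| = (g²)^(1/2)` of `g`: `m ∈ G`, `0 ≤ m`, `m² = g²`. -/
def IsAbs (g m : R) : Prop := m ∈ er.G ∧ er.le 0 m ∧ m ^ 2 = g ^ 2

/-- `a` is the positive part `g⁺ = ½(|g| + g)` of `g`, i.e. `a ∈ G` and `a + a = |g| + g`. -/
def IsPosPart (g a : R) : Prop := a ∈ er.G ∧ ∃ m, er.IsAbs g m ∧ a + a = m + g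

/-- `b` is the negative part `g⁻ = ½(|g| − g)` of `g`, i.e. `b ∈ G` and `b + b = |g| − g`. -/
def IsNegPart (g b : R) : Prop := b ∈ er.G ∧ ∃ m, er.IsAbs g m ∧ b + b = m - g

/-- `p` is the carrier projection `g°` of `g`. -/
def IsCarrier (g p : R) : Prop := p ∈ er.P ∧ ∀ h ∈ er.G, (g * h = 0 ↔ p * h = 0)

end ERing

namespace ERing

variable {R : Type*} [Ring R] [Algebra ℝ R] (er : ERing R)

/-- The 1-norm `‖g‖ = inf {λ : 0 ≤ λ, −λ·1 ≤ g ≤ λ·1}`. -/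
noncomputable def norm1 (g : R) : ℝ :=
  sInf {l : ℝ | 0 ≤ l ∧ er.le (-(l • (1 : R))) g ∧ er.le g (l • (1 : R))}

/-- The spectral lower bound `L_g = sup {λ : λ·1 ≤ g}`. -/
noncomputable def specL (g : R) : ℝ := sSup {l : ℝ | er.le (l • (1 : R)) g}

/-- The spectral upper bound `U_g = inf {λ : g ≤ λ·1}`. -/
noncomputable def specU (g : R) : ℝ := sInf {l : ℝ | er.le g (l • (1 : R))}

/-- `p` is the spectral projection `p_{g,λ} = 1 − ((g − λ·1)⁺)°`. -/
def IsSpecProj (g : R) (l : ℝ) (p : R) : Prop :=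
  ∃ a, er.IsPosPart (g - l • (1 : R)) a ∧ ∃ q, er.IsCarrier a q ∧ p = 1 - q

/-- `d` is the λ-eigenprojection `d_{g,λ} = 1 − (g − λ·1)°`. -/
def IsEigenProj (g : R) (l : ℝ) (d : R) : Prop :=
  ∃ q, er.IsCarrier (g - l • (1 : R)) q ∧ d = 1 - q

end ERing

/-!
Write `x_λ = g - λ` with Jordan decomposition `x_λ = x_λ⁺ - x_λ⁻`, so that `p_λ = 1 - (x_λ⁺)°`.
For `α ≤ μ` the absolute values `|x_α|` and `|x_μ|` commute and differ by at most `μ - α`,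
whence `x_μ⁺ ≤ x_α⁺ ≤ x_μ⁺ + (μ - α)`. The first inequality makes `λ ↦ p_λ` monotone. If a
projection `b` lies below every `p_μ` with `μ > α`, then `b x_μ⁺ b = 0`, so the second inequality
gives `b x_α⁺ b ≤ (μ - α) b` for all `μ > α`; by the Archimedean property `b x_α⁺ b = 0`, that is
`b ≤ p_α`. The square roots needed to compare absolute values are suprema of Newton's iteration,
which exist by the Vigier property.
-/

namespace ERing

section DirectedGroup

variable {R : Type*} [Ring R] (er : ERing R)

theorem mem_Epos_of_mem_E {e : R} (he : e ∈ er.E) : e ∈ er.Epos :=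
  AddSubmonoid.subset_closure he

theorem zero_mem_Epos : (0 : R) ∈ er.Epos := (AddSubmonoid.closure er.E).zero_mem

theorem one_mem_Epos : (1 : R) ∈ er.Epos := er.mem_Epos_of_mem_E er.one_mem

theorem add_mem_Epos {a b : R} (ha : a ∈ er.Epos) (hb : b ∈ er.Epos) : a + b ∈ er.Epos :=
  (AddSubmonoid.closure er.E).add_mem ha hb

theorem sq_mem_Epos {g : R} (hg : g ∈ er.G) : g ^ 2 ∈ er.Epos := by
  obtain ⟨a, ha, b, hb, rfl⟩ := hg
  exact er.epos_vi a ha b hb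

theorem mul_mem_Epos {a b : R} (ha : a ∈ er.Epos) (hb : b ∈ er.Epos) (hab : Commute a b) :
    a * b ∈ er.Epos :=
  er.epos_iii a ha b hb hab

theorem conj_mem_Epos {a b : R} (ha : a ∈ er.Epos) (hb : b ∈ er.Epos) :
    a * b * a ∈ er.Epos :=
  er.epos_iv a ha b hb

theorem eq_zero_of_add_eq_zero {a b : R} (ha : a ∈ er.Epos) (hb : b ∈ er.Epos)
    (h : a + b = 0) : a = 0 ∧ b = 0 := by
  have ha0 : a = 0 := er.epos_i a ha (by rwa [neg_eq_of_add_eq_zero_right h])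
  exact ⟨ha0, by simpa [ha0] using h⟩

theorem mem_G_of_mem_Epos {a : R} (ha : a ∈ er.Epos) : a ∈ er.G :=
  ⟨a, ha, 0, er.zero_mem_Epos, (sub_zero a).symm⟩

theorem one_mem_G : (1 : R) ∈ er.G := er.mem_G_of_mem_Epos er.one_mem_Epos

theorem add_mem_G {g h : R} (hg : g ∈ er.G) (hh : h ∈ er.G) : g + h ∈ er.G := by
  obtain ⟨a, ha, b, hb, rfl⟩ := hg
  obtain ⟨c, hc, d, hd, rfl⟩ := hh
  exact ⟨a + c, er.add_mem_Epos ha hc, b + d, er.add_mem_Epos hb hd, by abel⟩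

theorem neg_mem_G {g : R} (hg : g ∈ er.G) : -g ∈ er.G := by
  obtain ⟨a, ha, b, hb, rfl⟩ := hg
  exact ⟨b, hb, a, ha, neg_sub a b⟩

theorem sub_mem_G {g h : R} (hg : g ∈ er.G) (hh : h ∈ er.G) : g - h ∈ er.G := by
  simpa [sub_eq_add_neg] using er.add_mem_G hg (er.neg_mem_G hh)

theorem sq_mem_G {g : R} (hg : g ∈ er.G) : g ^ 2 ∈ er.G :=
  er.mem_G_of_mem_Epos (er.sq_mem_Epos hg)

theorem le_iff_sub_mem_Epos {g h : R} : er.le g h ↔ h - g ∈ er.Epos := Iff.rfl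

theorem le_trans {a b c : R} (hab : er.le a b) (hbc : er.le b c) : er.le a c := by
  simpa [le] using er.add_mem_Epos hbc hab

theorem le_antisymm {a b : R} (hab : er.le a b) (hba : er.le b a) : a = b :=
  (sub_eq_zero.mp (er.eq_zero_of_add_eq_zero hab hba (by abel)).1).symm

theorem le_zero_of_forall_le_sup_sub {f : ℕ → R} {s x : R} (hsup : er.IsSupIn er.G (Set.range f) s)
    (hx : x ∈ er.G) (h : ∀ n, er.le x (s - f n)) : er.le x 0 := by
  have hle : er.le s (s - x) := hsup.2.2 _ (er.sub_mem_G hsup.1 hx) (by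
    rintro _ ⟨n, rfl⟩
    simpa [le, sub_sub, add_comm] using h n)
  simpa [le] using hle

end DirectedGroup

section QuadraticAnnihilation

variable {R : Type*} [Ring R] (er : ERing R)

theorem mul_eq_zero_comm (hQA : er.HasQA) {g h : R} (hg : g ∈ er.G) (hh : h ∈ er.G)
    (hgh : g * h = 0) : h * g = 0 :=
  (hQA h hh g hg (by rw [sq, ← mul_assoc, mul_assoc (h * g), hgh, mul_zero])).1

theorem eq_zero_of_sq_eq_zero (hQA : er.HasQA) {g : R} (hg : g ∈ er.G) (h : g ^ 2 = 0) :
    g = 0 := by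
  simpa using (hQA 1 er.one_mem_G g hg (by rw [h, mul_zero, zero_mul])).1

theorem eq_of_sq_eq_sq (hQA : er.HasQA) {m t : R} (hm : m ∈ er.Epos) (ht : t ∈ er.Epos)
    (hmt : Commute m t) (h : m ^ 2 = t ^ 2) : m = t := by
  set u := t - m
  have huG : u ∈ er.G := er.sub_mem_G (er.mem_G_of_mem_Epos ht) (er.mem_G_of_mem_Epos hm)
  have hsum : t * u ^ 2 + m * u ^ 2 = 0 := by
    have e : (t + m) * u = t ^ 2 - m ^ 2 + (m * t - t * m) := by simp only [u]; noncomm_ring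
    rw [← add_mul, sq u, ← mul_assoc, e, h, hmt.eq]
    simp
  have htu : Commute t (u ^ 2) := ((Commute.refl t).sub_right hmt.symm).pow_right 2
  have hmu : Commute m (u ^ 2) := (hmt.sub_right (Commute.refl m)).pow_right 2
  obtain ⟨ht0, hm0⟩ := er.eq_zero_of_add_eq_zero (er.mul_mem_Epos ht (er.sq_mem_Epos huG) htu)
    (er.mul_mem_Epos hm (er.sq_mem_Epos huG) hmu) hsum
  have hu4 : (u ^ 2) ^ 2 = 0 := by
    have e : (u ^ 2) ^ 2 = (t * u ^ 2 - m * u ^ 2) * u := by simp only [u]; noncomm_ring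
    rw [e, ht0, hm0, sub_zero, zero_mul]
  have hu : u = 0 :=
    er.eq_zero_of_sq_eq_zero hQA huG (er.eq_zero_of_sq_eq_zero hQA (er.sq_mem_G huG) hu4)
  exact (sub_eq_zero.mp hu).symm

end QuadraticAnnihilation

section RealScalars

variable {R : Type*} [Ring R] [Algebra ℝ R] {er : ERing R}

variable (er) in
def HasNonnegSmul : Prop := ∀ l : ℝ, 0 ≤ l → ∀ a ∈ er.Epos, l • a ∈ er.Epos

theorem smul_mem_G (hs : er.HasNonnegSmul) (l : ℝ) {g : R} (hg : g ∈ er.G) : l • g ∈ er.G := by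
  obtain ⟨a, ha, b, hb, rfl⟩ := hg
  rcases le_total 0 l with hl | hl
  · exact ⟨l • a, hs l hl a ha, l • b, hs l hl b hb, smul_sub l a b⟩
  · have hl' : 0 ≤ -l := neg_nonneg.mpr hl
    refine ⟨(-l) • b, hs (-l) hl' b hb, (-l) • a, hs (-l) hl' a ha, ?_⟩
    rw [smul_sub, neg_smul, neg_smul, neg_sub_neg]

theorem smul_le_smul (hs : er.HasNonnegSmul) {a b : R} (h : er.le a b) {l : ℝ} (hl : 0 ≤ l) :
    er.le (l • a) (l • b) := by
  rw [le_iff_sub_mem_Epos, ← smul_sub]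
  exact hs l hl _ h

theorem commute_smul_one (c : R) (l : ℝ) : Commute c (l • (1 : R)) :=
  (Commute.one_right c).smul_right l

theorem exists_le_smul_one {a : R} (ha : a ∈ er.Epos) : ∃ N : ℝ, 0 < N ∧ er.le a (N • 1) := by
  induction ha using AddSubmonoid.closure_induction with
  | mem e he => exact ⟨1, one_pos, by simpa [le] using er.mem_Epos_of_mem_E (er.compl_mem e he)⟩
  | zero => exact ⟨1, one_pos, by simpa [le] using er.one_mem_Epos⟩
  | add x y _ _ hx hy =>
    obtain ⟨N, hN, hxN⟩ := hx
    obtain ⟨M, hM, hyM⟩ := hy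
    refine ⟨N + M, add_pos hN hM, ?_⟩
    rw [le_iff_sub_mem_Epos, add_smul, add_sub_add_comm]
    exact er.add_mem_Epos hxN hyM

/-- The Archimedean property, from the Vigier supremum of `n • c`. -/
theorem eq_zero_of_forall_le_smul_one (hCV : er.HasCV) (hs : er.HasNonnegSmul) {c : R}
    (hc : c ∈ er.Epos) (h : ∀ ε : ℝ, 0 < ε → er.le c (ε • 1)) : c = 0 := by
  have hbound : ∀ n : ℕ, er.le ((n : ℝ) • c) 1 := by
    rintro (_ | n)
    · simpa [le] using er.one_mem_Epos
    · have hpos : (0 : ℝ) < n + 1 := by positivity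
      have := smul_le_smul hs (h (n + 1 : ℝ)⁻¹ (inv_pos.mpr hpos)) hpos.le
      rwa [smul_smul, mul_inv_cancel₀ hpos.ne', one_smul, ← Nat.cast_succ] at this
  obtain ⟨s, hsup, -⟩ := hCV (fun n : ℕ => (n : ℝ) • c)
    (fun n => er.mem_G_of_mem_Epos (hs _ n.cast_nonneg c hc))
    (fun n => by simpa [le, add_smul] using hc)
    (fun m n => ((Commute.refl c).smul_left _).smul_right _)
    ⟨1, er.one_mem_G, hbound⟩
  have hneg : er.le c 0 :=
    er.le_zero_of_forall_le_sup_sub hsup (er.mem_G_of_mem_Epos hc) fun n => by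
      simpa [le, add_smul, sub_sub, add_comm] using hsup.2.1 _ ⟨n + 1, rfl⟩
  exact er.epos_i c hc (by simpa [le, Epos] using hneg)

end RealScalars

section SquareRoot

variable {R : Type*} [Ring R] [Algebra ℝ R] {er : ERing R}

/-- Newton's iteration, increasing to `√a` when `0 ≤ a ≤ 1`. -/
noncomputable def sqrtSeq (a : R) : ℕ → R
  | 0 => 0
  | n + 1 => sqrtSeq a n + (2 : ℝ)⁻¹ • (a - sqrtSeq a n ^ 2)

theorem sqrtSeq_succ (a : R) (n : ℕ) :
    sqrtSeq a (n + 1) = sqrtSeq a n + (2 : ℝ)⁻¹ • (a - sqrtSeq a n ^ 2) := rfl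

theorem commute_sqrtSeq {a c : R} (h : Commute c a) (n : ℕ) : Commute c (sqrtSeq a n) := by
  induction n with
  | zero => exact Commute.zero_right c
  | succ n ih => exact ih.add_right ((h.sub_right (ih.pow_right 2)).smul_right _)

theorem sqrtSeq_mem_G (hs : er.HasNonnegSmul) {a : R} (ha : a ∈ er.G) (n : ℕ) :
    sqrtSeq a n ∈ er.G := by
  induction n with
  | zero => exact er.mem_G_of_mem_Epos er.zero_mem_Epos
  | succ n ih => exact er.add_mem_G ih (smul_mem_G hs _ (er.sub_mem_G ha (er.sq_mem_G ih)))

theorem sqrtSeq_bounds (hs : er.HasNonnegSmul) {a : R} (ha0 : a ∈ er.Epos) (ha1 : er.le a 1)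
    (n : ℕ) : sqrtSeq a n ∈ er.Epos ∧ er.le (sqrtSeq a n) 1 ∧ er.le (sqrtSeq a n ^ 2) a := by
  induction n with
  | zero => simpa [sqrtSeq, le] using ⟨er.zero_mem_Epos, er.one_mem_Epos, ha0⟩
  | succ n ih =>
    obtain ⟨hpos, hle1, hsq⟩ := ih
    set s := sqrtSeq a n
    have hsucc : sqrtSeq a (n + 1) = s + (2 : ℝ)⁻¹ • (a - s ^ 2) := rfl
    have hsG : s ∈ er.G := sqrtSeq_mem_G hs (er.mem_G_of_mem_Epos ha0) n
    have has : a * s = s * a := (commute_sqrtSeq (Commute.refl a) n).eq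
    have hle1' : er.le (sqrtSeq a (n + 1)) 1 := by
      have e : 1 - sqrtSeq a (n + 1) = (2 : ℝ)⁻¹ • ((1 - s) ^ 2 + (1 - a)) := by
        simp only [hsucc, sq, sub_mul, mul_sub, mul_one, one_mul, smul_sub, smul_add]
        module
      rw [le_iff_sub_mem_Epos, e]
      exact hs _ (by norm_num) _
        (er.add_mem_Epos (er.sq_mem_Epos (er.sub_mem_G er.one_mem_G hsG)) ha1)
    have hsq' : er.le (sqrtSeq a (n + 1) ^ 2) a := by
      have e : a - sqrtSeq a (n + 1) ^ 2
          = (a - s ^ 2) * (1 - sqrtSeq a (n + 1)) + (4 : ℝ)⁻¹ • (a - s ^ 2) ^ 2 := by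
        have has' : ∀ x : R, a * (s * x) = s * (a * x) := fun x => by
          rw [← mul_assoc, has, mul_assoc]
        simp only [hsucc, sq, mul_assoc, sub_mul, mul_sub, add_mul, mul_add, mul_one,
          mul_smul_comm, smul_mul_assoc, smul_smul, smul_sub, smul_add, has, has']
        module
      have hcomm : Commute (a - s ^ 2) (1 - sqrtSeq a (n + 1)) :=
        (Commute.one_right _).sub_right (commute_sqrtSeq ((Commute.refl a).sub_left
          ((commute_sqrtSeq (Commute.refl a) n).symm.pow_left 2)) (n + 1))
      rw [le_iff_sub_mem_Epos, e]
      exact er.add_mem_Epos (er.mul_mem_Epos hsq hle1' hcomm)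
        (hs _ (by norm_num) _ (er.sq_mem_Epos (er.sub_mem_G (er.mem_G_of_mem_Epos ha0)
          (er.sq_mem_G hsG))))
    exact ⟨er.add_mem_Epos hpos (hs _ (by norm_num) _ hsq), hle1', hsq'⟩

theorem sqrtSeq_le_succ (hs : er.HasNonnegSmul) {a : R} (ha0 : a ∈ er.Epos) (ha1 : er.le a 1)
    (n : ℕ) : er.le (sqrtSeq a n) (sqrtSeq a (n + 1)) := by
  rw [le_iff_sub_mem_Epos, sqrtSeq_succ, add_sub_cancel_left]
  exact hs _ (by norm_num) _ (sqrtSeq_bounds hs ha0 ha1 n).2.2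

theorem sqrtSeq_le_sqrtSeq (hs : er.HasNonnegSmul) {a b : R} (ha0 : a ∈ er.Epos)
    (hab : er.le a b) (hb1 : er.le b 1) (hcomm : Commute a b) (n : ℕ) :
    er.le (sqrtSeq a n) (sqrtSeq b n) := by
  have hb0 : b ∈ er.Epos := by simpa using er.add_mem_Epos ha0 hab
  have ha1 : er.le a 1 := er.le_trans hab hb1
  induction n with
  | zero => simpa [sqrtSeq, le] using er.zero_mem_Epos
  | succ n ih =>
    set sa := sqrtSeq a n
    set sb := sqrtSeq b n
    have hsab : Commute sa sb := (commute_sqrtSeq (commute_sqrtSeq hcomm n).symm n).symm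
    have hsucc : sqrtSeq b (n + 1) - sqrtSeq a (n + 1)
        = (2 : ℝ)⁻¹ • ((sb - sa) * ((1 - sb) + (1 - sa)) + (b - a)) := by
      have e : sqrtSeq b (n + 1) - sqrtSeq a (n + 1)
          = sb + (2 : ℝ)⁻¹ • (b - sb ^ 2) - (sa + (2 : ℝ)⁻¹ • (a - sa ^ 2)) := rfl
      rw [e]
      simp only [sq, sub_mul, mul_sub, mul_add, mul_one, smul_sub, smul_add, hsab.eq]
      module
    have hcomm' : Commute (sb - sa) ((1 - sb) + (1 - sa)) :=
      (((Commute.one_right sb).sub_right (Commute.refl sb)).add_right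
        ((Commute.one_right sb).sub_right hsab.symm)).sub_left
        (((Commute.one_right sa).sub_right hsab).add_right
          ((Commute.one_right sa).sub_right (Commute.refl sa)))
    rw [le_iff_sub_mem_Epos, hsucc]
    exact hs _ (by norm_num) _ (er.add_mem_Epos (er.mul_mem_Epos ih
      (er.add_mem_Epos (sqrtSeq_bounds hs hb0 hb1 n).2.1 (sqrtSeq_bounds hs ha0 ha1 n).2.1)
      hcomm') hab)

theorem mem_Epos_of_isSupIn_sqrtSeq {a s : R} (hsup : er.IsSupIn er.G (Set.range (sqrtSeq a)) s) :
    s ∈ er.Epos := by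
  simpa [le, sqrtSeq] using hsup.2.1 _ ⟨0, rfl⟩

/-- Both `(a - s²)/2` and `(s² - a)/2` lie below every `s - sₙ`, hence below `0`. -/
theorem sq_eq_of_isSupIn_sqrtSeq (hs : er.HasNonnegSmul) {a s : R} (ha0 : a ∈ er.Epos)
    (ha1 : er.le a 1) (hsup : er.IsSupIn er.G (Set.range (sqrtSeq a)) s)
    (hsn : ∀ n, Commute s (sqrtSeq a n)) : s ^ 2 = a := by
  have hbounds := sqrtSeq_bounds hs ha0 ha1
  have hs0 : s ∈ er.Epos := mem_Epos_of_isSupIn_sqrtSeq hsup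
  have hs1 : er.le s 1 :=
    hsup.2.2 1 er.one_mem_G (by rintro _ ⟨n, rfl⟩; exact (hbounds n).2.1)
  have hgap : ∀ n, er.le (sqrtSeq a n) s := fun n => hsup.2.1 _ ⟨n, rfl⟩
  have hgap_s : ∀ n, Commute (s - sqrtSeq a n) s := fun n =>
    (Commute.refl s).sub_left (hsn n).symm
  have hgap_sn : ∀ n, Commute (s - sqrtSeq a n) (sqrtSeq a n) := fun n =>
    (hsn n).sub_left (Commute.refl _)
  have haG := er.mem_G_of_mem_Epos ha0
  have hsqG := er.sq_mem_G hsup.1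
  have hup : er.le ((2 : ℝ)⁻¹ • (a - s ^ 2)) 0 := er.le_zero_of_forall_le_sup_sub hsup
    (smul_mem_G hs _ (er.sub_mem_G haG hsqG)) fun n => by
      have e : s - sqrtSeq a n - (2 : ℝ)⁻¹ • (a - s ^ 2)
          = (s - sqrtSeq a (n + 1)) + (2 : ℝ)⁻¹ • ((s - sqrtSeq a n) * (s + sqrtSeq a n)) := by
        simp only [sqrtSeq_succ, sq, mul_add, sub_mul, (hsn n).eq]
        module
      rw [le_iff_sub_mem_Epos, e]
      exact er.add_mem_Epos (hgap (n + 1)) (hs _ (by norm_num) _ (er.mul_mem_Epos (hgap n)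
        (er.add_mem_Epos hs0 (hbounds n).1) ((hgap_s n).add_right (hgap_sn n))))
  have hdown : er.le ((2 : ℝ)⁻¹ • (s ^ 2 - a)) 0 := er.le_zero_of_forall_le_sup_sub hsup
    (smul_mem_G hs _ (er.sub_mem_G hsqG haG)) fun n => by
      have e : s - sqrtSeq a n - (2 : ℝ)⁻¹ • (s ^ 2 - a)
          = (2 : ℝ)⁻¹ • ((s - sqrtSeq a n) * ((1 - s) + (1 - sqrtSeq a n)))
            + (2 : ℝ)⁻¹ • (a - sqrtSeq a n ^ 2) := by
        simp only [sq, mul_add, mul_sub, sub_mul, mul_one, (hsn n).eq]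
        module
      have hcomm : Commute (s - sqrtSeq a n) ((1 - s) + (1 - sqrtSeq a n)) :=
        ((Commute.one_right _).sub_right (hgap_s n)).add_right
          ((Commute.one_right _).sub_right (hgap_sn n))
      rw [le_iff_sub_mem_Epos, e]
      exact er.add_mem_Epos (hs _ (by norm_num) _ (er.mul_mem_Epos (hgap n)
        (er.add_mem_Epos hs1 (hbounds n).2.1) hcomm)) (hs _ (by norm_num) _ (hbounds n).2.2)
  have h0 : (2 : ℝ)⁻¹ • (a - s ^ 2) = 0 :=
    er.le_antisymm hup (by simpa [le, ← smul_neg] using hdown)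
  exact (sub_eq_zero.mp ((smul_eq_zero.mp h0).resolve_left (by norm_num))).symm

theorem exists_sqrt_of_le_one (hCV : er.HasCV) (hs : er.HasNonnegSmul) {a : R}
    (ha0 : a ∈ er.Epos) (ha1 : er.le a 1) :
    ∃ s, er.IsSupIn er.G (Set.range (sqrtSeq a)) s ∧ s ^ 2 = a ∧
      ∀ c ∈ er.G, Commute c a → Commute c s := by
  have hG := sqrtSeq_mem_G hs (er.mem_G_of_mem_Epos ha0)
  obtain ⟨s, hsup, hCC⟩ := hCV (sqrtSeq a) hG (sqrtSeq_le_succ hs ha0 ha1)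
    (fun m n => (commute_sqrtSeq (commute_sqrtSeq (Commute.refl a) m).symm n).eq)
    ⟨1, er.one_mem_G, fun n => (sqrtSeq_bounds hs ha0 ha1 n).2.1⟩
  have hcomm : ∀ c ∈ er.G, Commute c a → Commute c s := fun c hc hca =>
    (hCC.2 c ⟨hc, by rintro _ ⟨n, rfl⟩; exact (commute_sqrtSeq hca n).eq⟩).symm
  refine ⟨s, hsup, sq_eq_of_isSupIn_sqrtSeq hs ha0 ha1 hsup fun n => ?_, hcomm⟩
  exact (hcomm _ (hG n) (commute_sqrtSeq (Commute.refl a) n).symm).symm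

theorem inv_smul_le_one (hs : er.HasNonnegSmul) {x : R} {N : ℝ} (hN : 0 < N)
    (hx : er.le x (N • 1)) : er.le (N⁻¹ • x) 1 := by
  simpa [smul_smul, hN.ne'] using smul_le_smul hs hx (inv_nonneg.mpr hN.le)

theorem exists_sup_sqrtSeq_eq (hQA : er.HasQA) (hCV : er.HasCV) (hs : er.HasNonnegSmul)
    {m : R} (hm : m ∈ er.Epos) {N : ℝ} (hN : 0 < N) (hmN : er.le (m ^ 2) (N • 1)) :
    ∃ s, er.IsSupIn er.G (Set.range (sqrtSeq (N⁻¹ • m ^ 2))) s ∧ m = √N • s ∧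
      ∀ c ∈ er.G, Commute c (m ^ 2) → Commute c s := by
  have hmG := er.mem_G_of_mem_Epos hm
  obtain ⟨s, hsup, hsq, hcomm⟩ := exists_sqrt_of_le_one hCV hs
    (hs _ (inv_nonneg.mpr hN.le) _ (er.sq_mem_Epos hmG)) (inv_smul_le_one hs hN hmN)
  have hcomm' : ∀ c ∈ er.G, Commute c (m ^ 2) → Commute c s := fun c hc h =>
    hcomm c hc (h.smul_right _)
  have hms : Commute m (√N • s) := (hcomm' m hmG ((Commute.refl m).pow_right 2)).smul_right _
  refine ⟨s, hsup, er.eq_of_sq_eq_sq hQA hm (hs _ (Real.sqrt_nonneg N) _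
    (mem_Epos_of_isSupIn_sqrtSeq hsup)) hms ?_, hcomm'⟩
  rw [smul_pow, Real.sq_sqrt hN.le, hsq, smul_smul, mul_inv_cancel₀ hN.ne', one_smul]

theorem commute_of_commute_sq (hQA : er.HasQA) (hCV : er.HasCV) (hs : er.HasNonnegSmul)
    {m c : R} (hm : m ∈ er.Epos) (hc : c ∈ er.G) (h : Commute c (m ^ 2)) : Commute c m := by
  obtain ⟨N, hN, hmN⟩ := exists_le_smul_one (er.sq_mem_Epos (er.mem_G_of_mem_Epos hm))
  obtain ⟨s, -, rfl, hcomm⟩ := exists_sup_sqrtSeq_eq hQA hCV hs hm hN hmN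
  exact (hcomm c hc h).smul_right _

/-- Newton's iteration is monotone in its argument. -/
theorem le_of_sq_le_sq (hQA : er.HasQA) (hCV : er.HasCV) (hs : er.HasNonnegSmul)
    {m z : R} (hm : m ∈ er.Epos) (hz : z ∈ er.Epos) (hmz : Commute m z)
    (h : er.le (m ^ 2) (z ^ 2)) : er.le m z := by
  obtain ⟨N, hN, hzN⟩ := exists_le_smul_one (er.sq_mem_Epos (er.mem_G_of_mem_Epos hz))
  obtain ⟨sm, hsupm, hm_eq, -⟩ := exists_sup_sqrtSeq_eq hQA hCV hs hm hN (er.le_trans h hzN)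
  obtain ⟨sz, hsupz, hz_eq, -⟩ := exists_sup_sqrtSeq_eq hQA hCV hs hz hN hzN
  have hle : er.le sm sz := hsupm.2.2 sz hsupz.1 <| by
    rintro _ ⟨k, rfl⟩
    refine er.le_trans (sqrtSeq_le_sqrtSeq hs (hs _ (inv_nonneg.mpr hN.le) _
      (er.sq_mem_Epos (er.mem_G_of_mem_Epos hm))) (smul_le_smul hs h (inv_nonneg.mpr hN.le))
      (inv_smul_le_one hs hN hzN) ((hmz.pow_pow 2 2).smul_left _ |>.smul_right _) k) ?_
    exact hsupz.2.1 _ ⟨k, rfl⟩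
  rw [hm_eq, hz_eq]
  exact smul_le_smul hs hle (Real.sqrt_nonneg N)

end SquareRoot

section Projections

variable {R : Type*} [Ring R] {er : ERing R}

theorem mem_Epos_of_mem_P {q : R} (hq : q ∈ er.P) : q ∈ er.Epos := by
  rw [hq.2]
  exact er.sq_mem_Epos hq.1

theorem one_sub_mem_P {q : R} (hq : q ∈ er.P) : 1 - q ∈ er.P := by
  refine ⟨er.sub_mem_G er.one_mem_G hq.1, ?_⟩
  have e : ((1 : R) - q) ^ 2 = 1 - q - (q - q ^ 2) := by noncomm_ring
  rw [e, ← hq.2, sub_self, sub_zero]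

theorem le_one_sub_of_mul_eq_zero (hQA : er.HasQA) {b q : R} (hb : b ∈ er.P) (hq : q ∈ er.P)
    (hqb : q * b = 0) : er.le b (1 - q) := by
  have hbq : b * q = 0 := er.mul_eq_zero_comm hQA hq.1 hb.1 hqb
  have e : (1 - q) * (1 - b) * (1 - q) = 1 - q - b := by
    calc (1 - q) * (1 - b) * (1 - q) = 1 - q - b + (q ^ 2 - q) + q * b + b * q - q * b * q := by
          noncomm_ring
      _ = 1 - q - b := by rw [← hq.2, hqb, hbq]; simp
  rw [le_iff_sub_mem_Epos, ← e]
  exact er.conj_mem_Epos (mem_Epos_of_mem_P (one_sub_mem_P hq))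
    (mem_Epos_of_mem_P (one_sub_mem_P hb))

theorem one_sub_mul_eq_zero_of_le {b p : R} (hb : b ∈ er.P) (hp : p ∈ er.P) (h : er.le b p) :
    (1 - p) * b = 0 := by
  have hpE : 1 - p ∈ er.Epos := mem_Epos_of_mem_P (one_sub_mem_P hp)
  have hp0 : (1 - p) * p = 0 := by rw [sub_mul, one_mul, ← sq, ← hp.2, sub_self]
  have e : (1 - p) * (p - b) * (1 - p) = -((1 - p) * b * (1 - p)) := by
    rw [mul_sub (1 - p) p b, hp0, zero_sub, neg_mul]
  exact (er.epos_v _ hpE b (mem_Epos_of_mem_P hb)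
    (er.epos_i _ (er.conj_mem_Epos hpE (mem_Epos_of_mem_P hb)) (e ▸ er.conj_mem_Epos hpE h))).1

theorem IsCarrier.mul_one_sub_eq_zero {a q : R} (hq : er.IsCarrier a q) : a * (1 - q) = 0 :=
  (hq.2 _ (er.sub_mem_G er.one_mem_G hq.1.1)).mpr <| by
    rw [mul_sub, mul_one, ← sq, ← hq.1.2, sub_self]

/-- The carrier of `a` splits `a + b` into `q (a + b) q = a` and `(1 - q) (a + b) (1 - q) = b`. -/
theorem IsCarrier.mem_Epos_of_mul_eq_zero (hQA : er.HasQA) {a b q : R} (hq : er.IsCarrier a q)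
    (ha : a ∈ er.G) (hb : b ∈ er.G) (hab : a * b = 0) (hpos : a + b ∈ er.Epos) :
    a ∈ er.Epos ∧ b ∈ er.Epos := by
  have haq : a * q = a := by simpa [mul_sub, sub_eq_zero, eq_comm] using hq.mul_one_sub_eq_zero
  have hqa : q * a = a := by
    have := er.mul_eq_zero_comm hQA ha (er.sub_mem_G er.one_mem_G hq.1.1) hq.mul_one_sub_eq_zero
    simpa [sub_mul, sub_eq_zero, eq_comm] using this
  have hqb : q * b = 0 := (hq.2 b hb).mp hab
  have hbq : b * q = 0 := er.mul_eq_zero_comm hQA hq.1.1 hb hqb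
  constructor
  · have e : q * (a + b) * q = a := by rw [mul_add, hqa, hqb, add_zero, haq]
    exact e ▸ er.conj_mem_Epos (mem_Epos_of_mem_P hq.1) hpos
  · have e : (1 - q) * (a + b) * (1 - q) = b := by
      simp only [sub_mul, mul_sub, one_mul, mul_one, mul_add, add_mul, hqa, hqb, haq, hbq, zero_mul]
      abel
    exact e ▸ er.conj_mem_Epos (mem_Epos_of_mem_P (one_sub_mem_P hq.1)) hpos

theorem IsCarrier.one_sub_le_one_sub (hQA : er.HasQA) {a a' q q' : R} (hq : er.IsCarrier a q)
    (hq' : er.IsCarrier a' q') (ha' : a' ∈ er.Epos) (h : er.le a' a) :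
    er.le (1 - q) (1 - q') := by
  have hcE : 1 - q ∈ er.Epos := mem_Epos_of_mem_P (one_sub_mem_P hq.1)
  have hsum : (1 - q) * a' * (1 - q) + (1 - q) * (a - a') * (1 - q) = 0 := by
    rw [← add_mul, ← mul_add, add_sub_cancel, mul_assoc, hq.mul_one_sub_eq_zero, mul_zero]
  have h0 := (er.eq_zero_of_add_eq_zero (er.conj_mem_Epos hcE ha') (er.conj_mem_Epos hcE h)
    hsum).1
  have hq'c : q' * (1 - q) = 0 :=
    (hq'.2 _ (er.sub_mem_G er.one_mem_G hq.1.1)).mp (er.epos_v _ hcE a' ha' h0).2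
  simpa using le_one_sub_of_mul_eq_zero hQA (one_sub_mem_P hq.1) hq'.1 hq'c

end Projections

section JordanDecomposition

variable {R : Type*} [Ring R] {er : ERing R}

variable (er) in
/-- `x = a - b` with `a, b ≥ 0` and `|x| = a + b`, i.e. `a = x⁺` and `b = x⁻`. -/
def IsJordanDecomp (x a b : R) : Prop :=
  x = a - b ∧ (a + b) ^ 2 = x ^ 2 ∧ a ∈ er.Epos ∧ b ∈ er.Epos

theorem IsJordanDecomp.add_mem_Epos {x a b : R} (hd : er.IsJordanDecomp x a b) :
    a + b ∈ er.Epos :=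
  er.add_mem_Epos hd.2.2.1 hd.2.2.2

theorem IsJordanDecomp.mem_G {x a b : R} (hd : er.IsJordanDecomp x a b) : x ∈ er.G :=
  hd.1 ▸ er.sub_mem_G (er.mem_G_of_mem_Epos hd.2.2.1) (er.mem_G_of_mem_Epos hd.2.2.2)

end JordanDecomposition

section Spectral

variable {R : Type*} [Ring R] [Algebra ℝ R] {er : ERing R}

theorem IsJordanDecomp.commute_add (hQA : er.HasQA) (hCV : er.HasCV) (hs : er.HasNonnegSmul)
    {x a b c : R} (hd : er.IsJordanDecomp x a b) (hc : c ∈ er.G) (hcx : Commute c x) :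
    Commute c (a + b) :=
  commute_of_commute_sq hQA hCV hs hd.add_mem_Epos hc (hd.2.1 ▸ hcx.pow_right 2)

/-- The triangle inequality `|x + t| ≤ |x| + |t|` for scalar `t`. -/
theorem IsJordanDecomp.le_add_abs_smul_one (hQA : er.HasQA) (hCV : er.HasCV)
    (hs : er.HasNonnegSmul) {x a b m : R} (hd : er.IsJordanDecomp x a b) (hm : m ∈ er.Epos)
    {t : ℝ} (hsq : m ^ 2 = (x + t • 1) ^ 2) (hcomm : Commute m (a + b)) :
    er.le m (a + b + |t| • 1) := by
  refine le_of_sq_le_sq hQA hCV hs hm (er.add_mem_Epos hd.add_mem_Epos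
    (hs _ (abs_nonneg t) _ er.one_mem_Epos)) (hcomm.add_right (commute_smul_one _ _)) ?_
  have e : (a + b + |t| • 1) ^ 2 - m ^ 2
      = (2 * (|t| - t)) • a + (2 * (|t| + t)) • b := by
    have hsq' : ∀ y : R, ∀ r : ℝ, (y + r • 1) ^ 2 = y ^ 2 + (2 * r) • y + (r ^ 2) • 1 := by
      intro y r
      simp only [sq, add_mul, mul_add, smul_mul_assoc, mul_smul_comm, mul_one, one_mul]
      module
    rw [hsq, hsq', hsq', hd.2.1, sq_abs, hd.1]
    module
  rw [le_iff_sub_mem_Epos, e]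
  exact er.add_mem_Epos (hs _ (by linarith [le_abs_self t]) _ hd.2.2.1)
    (hs _ (by linarith [neg_abs_le t]) _ hd.2.2.2)

theorem IsJordanDecomp.commute_sub_smul_one (hQA : er.HasQA) (hCV : er.HasCV)
    (hs : er.HasNonnegSmul) {x a b a' b' : R} {δ : ℝ} (hd : er.IsJordanDecomp x a b)
    (hd' : er.IsJordanDecomp (x - δ • 1) a' b') : Commute (a' + b') (a + b) := by
  have hm' : Commute (a' + b') (x - δ • 1) :=
    (hd'.commute_add hQA hCV hs hd'.mem_G (Commute.refl _)).symm
  refine hd.commute_add hQA hCV hs (er.mem_G_of_mem_Epos hd'.add_mem_Epos) ?_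
  simpa using hm'.add_right (commute_smul_one _ δ)

theorem IsJordanDecomp.posPart_sub_smul_one_le (hQA : er.HasQA) (hCV : er.HasCV)
    (hs : er.HasNonnegSmul) {x a b a' b' : R} {δ : ℝ} (hδ : 0 ≤ δ)
    (hd : er.IsJordanDecomp x a b) (hd' : er.IsJordanDecomp (x - δ • 1) a' b') :
    er.le a' a := by
  have hle := hd.le_add_abs_smul_one hQA hCV hs hd'.add_mem_Epos (t := -δ)
    (by rw [hd'.2.1, neg_smul, sub_eq_add_neg]) (hd.commute_sub_smul_one hQA hCV hs hd')
  have e : a - a' = (2 : ℝ)⁻¹ • (a + b + |-δ| • 1 - (a' + b')) := by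
    rw [abs_neg, abs_of_nonneg hδ]
    linear_combination (norm := module) (-(2 : ℝ)⁻¹) • hd.1 + (2 : ℝ)⁻¹ • hd'.1
  rw [le_iff_sub_mem_Epos, e]
  exact hs _ (by norm_num) _ hle

theorem IsJordanDecomp.posPart_le_add (hQA : er.HasQA) (hCV : er.HasCV)
    (hs : er.HasNonnegSmul) {x a b a' b' : R} {δ : ℝ} (hδ : 0 ≤ δ)
    (hd : er.IsJordanDecomp x a b) (hd' : er.IsJordanDecomp (x - δ • 1) a' b') :
    er.le a (a' + δ • 1) := by
  have hle := hd'.le_add_abs_smul_one hQA hCV hs hd.add_mem_Epos (t := δ)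
    (by rw [hd.2.1, sub_add_cancel]) (hd.commute_sub_smul_one hQA hCV hs hd').symm
  have e : a' + δ • 1 - a = (2 : ℝ)⁻¹ • (a' + b' + |δ| • 1 - (a + b)) := by
    rw [abs_of_nonneg hδ]
    linear_combination (norm := module) (2 : ℝ)⁻¹ • hd.1 - (2 : ℝ)⁻¹ • hd'.1
  rw [le_iff_sub_mem_Epos, e]
  exact hs _ (by norm_num) _ hle

theorem IsSpecProj.mem_P {g p : R} {l : ℝ} (hp : er.IsSpecProj g l p) : p ∈ er.P := by
  obtain ⟨a, -, q, hq, rfl⟩ := hp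
  exact one_sub_mem_P hq.1

theorem IsSpecProj.exists_isJordanDecomp (hQA : er.HasQA) (hCV : er.HasCV)
    (hs : er.HasNonnegSmul) {g p : R} {l : ℝ} (hp : er.IsSpecProj g l p) :
    ∃ a b q, er.IsJordanDecomp (g - l • 1) a b ∧ er.IsCarrier a q ∧ p = 1 - q := by
  obtain ⟨a, ⟨haG, m, ⟨hmG, hm0, hmsq⟩, haa⟩, q, hq, rfl⟩ := hp
  set x := g - l • (1 : R)
  have hmE : m ∈ er.Epos := by simpa [le] using hm0
  have hx : x = a - (m - a) := by rw [sub_sub_eq_add_sub, haa, add_sub_cancel_left]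
  have hxG : x ∈ er.G := hx ▸ er.sub_mem_G haG (er.sub_mem_G hmG haG)
  have hxm : Commute x m :=
    commute_of_commute_sq hQA hCV hs hmE hxG (hmsq ▸ (Commute.refl x).pow_right 2)
  have hab : a * (m - a) = 0 := by
    have h4 : (a + a) * ((m - a) + (m - a)) = 0 := by
      rw [haa, show (m - a) + (m - a) = m - x by rw [hx]; abel]
      have e : (m + x) * (m - x) = m ^ 2 - x ^ 2 + (x * m - m * x) := by noncomm_ring
      rw [e, hmsq, hxm.eq, sub_self, sub_self, add_zero]
    have e : a * (m - a) = (4 : ℝ)⁻¹ • ((a + a) * ((m - a) + (m - a))) := by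
      simp only [add_mul, mul_add]
      module
    rw [e, h4, smul_zero]
  obtain ⟨haE, hbE⟩ := hq.mem_Epos_of_mul_eq_zero hQA haG (er.sub_mem_G hmG haG) hab
    (by rwa [add_sub_cancel])
  exact ⟨a, m - a, q, ⟨hx, by rw [add_sub_cancel, hmsq], haE, hbE⟩, hq, rfl⟩

theorem IsSpecProj.le_of_le (hQA : er.HasQA) (hCV : er.HasCV) (hs : er.HasNonnegSmul)
    {g p p' : R} {l l' : ℝ} (hll' : l ≤ l') (hp : er.IsSpecProj g l p)
    (hp' : er.IsSpecProj g l' p') : er.le p p' := by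
  obtain ⟨a, b, q, hd, hq, rfl⟩ := hp.exists_isJordanDecomp hQA hCV hs
  obtain ⟨a', b', q', hd', hq', rfl⟩ := hp'.exists_isJordanDecomp hQA hCV hs
  rw [show g - l' • (1 : R) = g - l • 1 - (l' - l) • 1 by rw [sub_smul]; abel] at hd'
  exact hq.one_sub_le_one_sub hQA hq' hd'.2.2.1
    (hd.posPart_sub_smul_one_le hQA hCV hs (sub_nonneg.mpr hll') hd')

theorem IsSpecProj.le_of_forall_lt_le (hQA : er.HasQA) (hCV : er.HasCV)
    (hs : er.HasNonnegSmul) {g b : R} {p : ℝ → R} (hp : ∀ l, er.IsSpecProj g l (p l))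
    (hb : b ∈ er.P) {α : ℝ} (hbp : ∀ μ, α < μ → er.le b (p μ)) : er.le b (p α) := by
  obtain ⟨a, n, q, hd, hq, hpα⟩ := (hp α).exists_isJordanDecomp hQA hCV hs
  have hbE : b ∈ er.Epos := mem_Epos_of_mem_P hb
  -- `b ≤ p (α + ε)` kills `(g - (α + ε))⁺` on `b`, and that positive part is `ε`-close to `a`
  have hsmall : ∀ ε : ℝ, 0 < ε → er.le (b * a * b) (ε • 1) := by
    intro ε hε
    obtain ⟨a', n', q', hd', hq', hpμ⟩ := (hp (α + ε)).exists_isJordanDecomp hQA hCV hs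
    rw [show g - (α + ε) • (1 : R) = g - α • 1 - ε • 1 by rw [add_smul]; abel] at hd'
    have hq'b : q' * b = 0 := by
      simpa [hpμ] using one_sub_mul_eq_zero_of_le hb (hp (α + ε)).mem_P (hbp (α + ε) (by linarith))
    have hba' : b * a' = 0 := er.mul_eq_zero_comm hQA (er.mem_G_of_mem_Epos hd'.2.2.1) hb.1
      ((hq'.2 b hb.1).mpr hq'b)
    have hle := hd.posPart_le_add hQA hCV hs hε.le hd'
    have hconj : er.le (b * a * b) (b * (a' + ε • 1) * b) := by
      rw [le_iff_sub_mem_Epos, ← sub_mul, ← mul_sub]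
      exact er.conj_mem_Epos hbE hle
    have e : b * (a' + ε • 1) * b = ε • b := by
      rw [mul_add, hba', zero_add, mul_smul_comm, mul_one, smul_mul_assoc, ← sq, ← hb.2]
    refine er.le_trans hconj (e ▸ smul_le_smul hs ?_ hε.le)
    simpa [le] using mem_Epos_of_mem_P (one_sub_mem_P hb)
  have h0 : b * a * b = 0 :=
    eq_zero_of_forall_le_smul_one hCV hs (er.conj_mem_Epos hbE hd.2.2.1) hsmall
  have hqb : q * b = 0 := (hq.2 b hb.1).mp (er.epos_v b hbE a hd.2.2.1 h0).2
  rw [hpα]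
  exact le_one_sub_of_mul_eq_zero hQA hb hq.1 hqb

end Spectral

end ERing

theorem stmt19_general {R : Type*} [Ring R] [Algebra ℝ R] (er : ERing R) (hAH : er.IsAH)
    (hscal : ∀ l : ℝ, 0 ≤ l → ∀ a ∈ er.Epos, l • a ∈ er.Epos)
    (g : R) (p : ℝ → R)
    (hp : ∀ l : ℝ, er.IsSpecProj g l (p l)) (α : ℝ) :
    er.IsInfIn er.P {x | ∃ mu : ℝ, α < mu ∧ x = p mu} (p α) := by
  obtain ⟨-, hQA, hCV⟩ := hAH
  refine ⟨(hp α).mem_P, ?_, fun b hb hbp => ?_⟩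
  · rintro _ ⟨μ, hμ, rfl⟩
    exact (hp α).le_of_le hQA hCV hscal hμ.le (hp μ)
  · exact ERing.IsSpecProj.le_of_forall_lt_le hQA hCV hscal hp hb fun μ hμ => hbp _ ⟨μ, hμ, rfl⟩

/-- In an AH-algebra (with real scalars), for every `α ∈ ℝ` the
spectral projection `p_α` is the infimum in `P` of `{p_μ : α < μ}`. -/
theorem stmt19 {R : Type*} [Ring R] [Algebra ℝ R] (er : ERing R) (hAH : er.IsAH)
    (hscal : ∀ l : ℝ, 0 ≤ l → ∀ a ∈ er.Epos, l • a ∈ er.Epos)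
    (g : R) (hg : g ∈ er.G) (p : ℝ → R)
    (hp : ∀ l : ℝ, er.IsSpecProj g l (p l)) (α : ℝ) :
    er.IsInfIn er.P {x | ∃ mu : ℝ, α < mu ∧ x = p mu} (p α) :=
  stmt19_general er hAH hscal g p hp α
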